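/- arXiv:1903.07648 — 4 statements merged into one kernel-verified Lean document; each statement's English description precedes it below -/
import Mathlib

section
/- Let τ : ℕ → ℝ^s be linearly independent (i.e., the only η with ⟪τ(k),η⟫ = 0 for all k is η = 0). Suppose for every η ∈ ℝ^s there exists η̂ ∈ ℝ^s with ⟪τ(k+1), η⟫ = ⟪τ(k), η̂⟫ for all k ∈ ℕ. Then there exists a matrix M ∈ ℝ^{s×s} such that τ(k+1) = M τ(k) for all k ∈ ℕ. -/
open Matrix

/-- If `τ : ℕ → ℝ^s` is linearly independent and the span of trajectories
`k ↦ ⟪τ(k), η⟫` is invariant under the unit time shift, then there is a matrix `M`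
with `τ(k+1) = M τ(k)` for all `k`. -/
theorem stmt_1 (s : ℕ) (τ : ℕ → Fin s → ℝ)
    (hli : ∀ η : Fin s → ℝ, (∀ k : ℕ, τ k ⬝ᵥ η = 0) → η = 0)
    (hshift : ∀ η : Fin s → ℝ, ∃ η' : Fin s → ℝ, ∀ k : ℕ, τ (k + 1) ⬝ᵥ η = τ k ⬝ᵥ η') :
    ∃ M : Matrix (Fin s) (Fin s) ℝ, ∀ k : ℕ, τ (k + 1) = M.mulVec (τ k) := by
  choose f hf using fun j => hshift (Pi.single j 1)
  refine ⟨Matrix.of fun j i => f j i, fun k => ?_⟩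
  funext j
  have h := hf j k
  simpa [Matrix.mulVec, dotProduct, Pi.single_apply, mul_ite, mul_comm] using h
end

section
/- Let A ∈ ℝ^{n×n}, B ∈ ℝ^{n×m}, M ∈ ℝ^{s×s}, and let τ : ℕ → ℝ^s satisfy τ(k+1) = M τ(k) and be linearly independent. Define x̃(k) = (I_n ⊗ τ(k))ᵀ η_x and ũ(k) = (I_m ⊗ τ(k))ᵀ η_u for η_x ∈ ℝ^{ns}, η_u ∈ ℝ^{ms}. Then the algebraic condition (I_n ⊗ Mᵀ − A ⊗ I_s) η_x − (B ⊗ I_s) η_u = 0 holds if and only if x̃(k+1) = A x̃(k) + B ũ(k) for all k ∈ ℕ. -/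
open Matrix Kronecker

/-- The parametrized state trajectory `x̃(k) = (I_n ⊗ τ(k))ᵀ η_x ∈ ℝ^n`. -/
def paramTraj {n s : ℕ} (τ : ℕ → Fin s → ℝ) (η : Fin n × Fin s → ℝ) (k : ℕ) :
    Fin n → ℝ :=
  fun i => ∑ j : Fin s, τ k j * η (i, j)

/-!
Reshape the coefficient vectors into matrices, `η_x = vec X` and `η_u = vec U` with
`X ∈ ℝ^{s×n}`, `U ∈ ℝ^{s×m}`. Then `x̃(k) = τ(k)ᵀ X`, and the Kronecker identity
`(P ⊗ Q) vec X = vec (Q X Pᵀ)` turns the algebraic condition into `R = 0` for the residual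
matrix `R = Mᵀ X − X Aᵀ − U Bᵀ`, while the recursion `τ(k+1) = M τ(k)` gives
`x̃(k+1) − A x̃(k) − B ũ(k) = τ(k)ᵀ R`. By linear independence of `τ`, `R = 0` exactly when
`τ(k)ᵀ R = 0` for all `k`.
-/

theorem Matrix.eq_zero_iff_forall_vecMul_eq_zero {ι m n R : Type*} [Fintype m]
    [NonUnitalNonAssocSemiring R] {v : ι → m → R}
    (hv : ∀ η : m → R, (∀ k, v k ⬝ᵥ η = 0) → η = 0) {X : Matrix m n R} :
    X = 0 ↔ ∀ k, v k ᵥ* X = 0 := by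
  refine ⟨fun hX k => by rw [hX, vecMul_zero], fun h => ?_⟩
  ext i j
  exact congrFun (hv (fun i => X i j) fun k => congrFun (h k) j) i

def coeffMatrix {n s : ℕ} (η : Fin n × Fin s → ℝ) : Matrix (Fin s) (Fin n) ℝ :=
  of fun j i => η (i, j)

section

variable {n m s : ℕ}

def residualMatrix (A : Matrix (Fin n) (Fin n) ℝ) (B : Matrix (Fin n) (Fin m) ℝ)
    (M : Matrix (Fin s) (Fin s) ℝ) (ηx : Fin n × Fin s → ℝ) (ηu : Fin m × Fin s → ℝ) :
    Matrix (Fin s) (Fin n) ℝ :=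
  Mᵀ * coeffMatrix ηx - coeffMatrix ηx * Aᵀ - coeffMatrix ηu * Bᵀ

theorem vec_coeffMatrix (η : Fin n × Fin s → ℝ) : vec (coeffMatrix η) = η := rfl

theorem paramTraj_eq_vecMul (τ : ℕ → Fin s → ℝ) (η : Fin n × Fin s → ℝ) (k : ℕ) :
    paramTraj τ η k = τ k ᵥ* coeffMatrix η := rfl

theorem kronecker_residual_eq_vec (A : Matrix (Fin n) (Fin n) ℝ) (B : Matrix (Fin n) (Fin m) ℝ)
    (M : Matrix (Fin s) (Fin s) ℝ) (ηx : Fin n × Fin s → ℝ) (ηu : Fin m × Fin s → ℝ) :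
    ((1 : Matrix (Fin n) (Fin n) ℝ) ⊗ₖ Mᵀ - A ⊗ₖ (1 : Matrix (Fin s) (Fin s) ℝ)) *ᵥ ηx
        - (B ⊗ₖ (1 : Matrix (Fin s) (Fin s) ℝ)) *ᵥ ηu
      = vec (residualMatrix A B M ηx ηu) := by
  conv_lhs => rw [← vec_coeffMatrix ηx, ← vec_coeffMatrix ηu]
  rw [residualMatrix, sub_mulVec, kronecker_mulVec_vec, kronecker_mulVec_vec, kronecker_mulVec_vec,
    vec_sub, vec_sub, transpose_one, Matrix.mul_one, Matrix.one_mul, Matrix.one_mul]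

theorem paramTraj_succ_sub_eq_vecMul (A : Matrix (Fin n) (Fin n) ℝ)
    (B : Matrix (Fin n) (Fin m) ℝ) (M : Matrix (Fin s) (Fin s) ℝ) {τ : ℕ → Fin s → ℝ}
    (hrec : ∀ k, τ (k + 1) = M *ᵥ τ k) (ηx : Fin n × Fin s → ℝ) (ηu : Fin m × Fin s → ℝ)
    (k : ℕ) :
    paramTraj τ ηx (k + 1) - (A *ᵥ paramTraj τ ηx k + B *ᵥ paramTraj τ ηu k)
      = τ k ᵥ* residualMatrix A B M ηx ηu := by
  simp only [residualMatrix, paramTraj_eq_vecMul, hrec, ← vecMul_transpose, vecMul_vecMul,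
    vecMul_sub]
  abel

end

/-- Proposition 2: for linearly independent basis functions with `τ(k+1) = M τ(k)`, the
algebraic condition `(I_n ⊗ Mᵀ − A ⊗ I_s) η_x − (B ⊗ I_s) η_u = 0` is equivalent to the
exact LTI dynamics `x̃(k+1) = A x̃(k) + B ũ(k)` for all `k`. -/
theorem stmt_5 (n m s : ℕ)
    (A : Matrix (Fin n) (Fin n) ℝ) (B : Matrix (Fin n) (Fin m) ℝ)
    (M : Matrix (Fin s) (Fin s) ℝ) (τ : ℕ → Fin s → ℝ)
    (hrec : ∀ k : ℕ, τ (k + 1) = M.mulVec (τ k))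
    (hli : ∀ η : Fin s → ℝ, (∀ k : ℕ, τ k ⬝ᵥ η = 0) → η = 0)
    (ηx : Fin n × Fin s → ℝ) (ηu : Fin m × Fin s → ℝ) :
    (((1 : Matrix (Fin n) (Fin n) ℝ) ⊗ₖ Mᵀ
        - A ⊗ₖ (1 : Matrix (Fin s) (Fin s) ℝ)).mulVec ηx
      - (B ⊗ₖ (1 : Matrix (Fin s) (Fin s) ℝ)).mulVec ηu = 0) ↔
    (∀ k : ℕ, paramTraj τ ηx (k + 1)
        = A.mulVec (paramTraj τ ηx k) + B.mulVec (paramTraj τ ηu k)) := by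
  rw [kronecker_residual_eq_vec, vec_eq_zero_iff, eq_zero_iff_forall_vecMul_eq_zero hli]
  simp only [← paramTraj_succ_sub_eq_vecMul A B M hrec, sub_eq_zero]
end

section
/- (Recursive feasibility) In the LTI setting: suppose (η_x, η_u) is feasible for the parametrized problem with initial condition x₀, i.e. (I_n ⊗ Mᵀ − A ⊗ I_s)η_x = (B ⊗ I_s)η_u, (I_n ⊗ τ(0))ᵀ η_x = x₀, and g(x̃(k), ũ(k)) ≤ 0 for all k ∈ ℕ. Then the shifted parameters η_x⁺ = (I_n ⊗ Mᵀ)η_x, η_u⁺ = (I_m ⊗ Mᵀ)η_u are feasible for the problem with initial condition x₁ = A x₀ + B ũ(0). -/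
open Matrix Kronecker

/-- Feasibility of parameters `(η_x, η_u)` for the parametrized LTI problem with initial
condition `x₀`: dynamics equality constraint, initial-condition constraint, and the
pointwise-in-time inequality constraints `g(x̃(k), ũ(k)) ≤ 0` for all `k`. -/
def Feasible {n m s nc : ℕ} (A : Matrix (Fin n) (Fin n) ℝ) (B : Matrix (Fin n) (Fin m) ℝ)
    (M : Matrix (Fin s) (Fin s) ℝ) (τ : ℕ → Fin s → ℝ)
    (g : (Fin n → ℝ) → (Fin m → ℝ) → Fin nc → ℝ)
    (x0 : Fin n → ℝ) (ηx : Fin n × Fin s → ℝ) (ηu : Fin m × Fin s → ℝ) : Prop :=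
  (((1 : Matrix (Fin n) (Fin n) ℝ) ⊗ₖ Mᵀ - A ⊗ₖ (1 : Matrix (Fin s) (Fin s) ℝ)).mulVec ηx
      - (B ⊗ₖ (1 : Matrix (Fin s) (Fin s) ℝ)).mulVec ηu = 0) ∧
  paramTraj τ ηx 0 = x0 ∧
  ∀ (k : ℕ) (c : Fin nc), g (paramTraj τ ηx k) (paramTraj τ ηu k) c ≤ 0

lemma paramTraj_shift {p s : ℕ} (M : Matrix (Fin s) (Fin s) ℝ) (τ : ℕ → Fin s → ℝ)
    (hrec : ∀ k : ℕ, τ (k + 1) = M.mulVec (τ k)) (η : Fin p × Fin s → ℝ) (k : ℕ) :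
    paramTraj τ (((1 : Matrix (Fin p) (Fin p) ℝ) ⊗ₖ Mᵀ).mulVec η) k
      = paramTraj τ η (k + 1) := by
  funext i
  simp only [paramTraj, mulVec, dotProduct, Fintype.sum_prod_type, kroneckerMap_apply,
    transpose_apply, one_apply, ite_mul, one_mul, zero_mul, hrec k,
    Finset.mem_univ, if_true]
  have h1 : ∀ x : Fin s,
      (∑ x1 : Fin p, ∑ x2 : Fin s, if i = x1 then M x2 x * η (x1, x2) else 0)
        = ∑ x2 : Fin s, M x2 x * η (i, x2) := by
    intro x; rw [Finset.sum_comm]; simp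
  simp only [h1, Finset.mul_sum, Finset.sum_mul]
  rw [Finset.sum_comm]
  exact Finset.sum_congr rfl fun _ _ => Finset.sum_congr rfl fun _ _ => by ring

lemma paramTraj_kron_one {p q s : ℕ} (C : Matrix (Fin p) (Fin q) ℝ) (τ : ℕ → Fin s → ℝ)
    (η : Fin q × Fin s → ℝ) (k : ℕ) :
    paramTraj τ ((C ⊗ₖ (1 : Matrix (Fin s) (Fin s) ℝ)).mulVec η) k
      = C.mulVec (paramTraj τ η k) := by
  funext i
  simp only [paramTraj, mulVec, dotProduct, Fintype.sum_prod_type, kroneckerMap_apply,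
    one_apply, mul_ite, mul_one, mul_zero, ite_mul, zero_mul,
    Finset.sum_ite_eq, Finset.mem_univ, if_true, Finset.mul_sum]
  rw [Finset.sum_comm]
  exact Finset.sum_congr rfl fun _ _ => Finset.sum_congr rfl fun _ _ => by ring

lemma paramTraj_sub {p s : ℕ} (τ : ℕ → Fin s → ℝ) (v w : Fin p × Fin s → ℝ) (k : ℕ) :
    paramTraj τ (v - w) k = paramTraj τ v k - paramTraj τ w k := by
  funext i; simp [paramTraj, mul_sub, Finset.sum_sub_distrib]


/-- Recursive feasibility: if `(η_x, η_u)` is feasible for initial condition `x₀`, then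
the shifted parameters `η⁺ = (I ⊗ Mᵀ) η` are feasible for `x₁ = A x₀ + B ũ(0)`. -/
theorem stmt_15 (n m s nc : ℕ)
    (A : Matrix (Fin n) (Fin n) ℝ) (B : Matrix (Fin n) (Fin m) ℝ)
    (M : Matrix (Fin s) (Fin s) ℝ) (τ : ℕ → Fin s → ℝ)
    (hrec : ∀ k : ℕ, τ (k + 1) = M.mulVec (τ k))
    (hli : ∀ η : Fin s → ℝ, (∀ k : ℕ, τ k ⬝ᵥ η = 0) → η = 0)
    (g : (Fin n → ℝ) → (Fin m → ℝ) → Fin nc → ℝ)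
    (x0 : Fin n → ℝ) (ηx : Fin n × Fin s → ℝ) (ηu : Fin m × Fin s → ℝ)
    (hfeas : Feasible A B M τ g x0 ηx ηu) :
    Feasible A B M τ g (A.mulVec x0 + B.mulVec (paramTraj τ ηu 0))
      (((1 : Matrix (Fin n) (Fin n) ℝ) ⊗ₖ Mᵀ).mulVec ηx)
      (((1 : Matrix (Fin m) (Fin m) ℝ) ⊗ₖ Mᵀ).mulVec ηu) := by
  obtain ⟨hdyn, hinit, hineq⟩ := hfeas
  refine ⟨?_, ?_, ?_⟩
  · -- dynamics constraint for the shifted parameters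
    have e1 : ((1 : Matrix (Fin n) (Fin n) ℝ) ⊗ₖ Mᵀ - A ⊗ₖ (1 : Matrix (Fin s) (Fin s) ℝ))
        * ((1 : Matrix (Fin n) (Fin n) ℝ) ⊗ₖ Mᵀ)
        = ((1 : Matrix (Fin n) (Fin n) ℝ) ⊗ₖ Mᵀ)
          * ((1 : Matrix (Fin n) (Fin n) ℝ) ⊗ₖ Mᵀ - A ⊗ₖ (1 : Matrix (Fin s) (Fin s) ℝ)) := by
      simp [sub_mul, mul_sub, ← mul_kronecker_mul]
    have e2 : (B ⊗ₖ (1 : Matrix (Fin s) (Fin s) ℝ))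
        * ((1 : Matrix (Fin m) (Fin m) ℝ) ⊗ₖ Mᵀ)
        = ((1 : Matrix (Fin n) (Fin n) ℝ) ⊗ₖ Mᵀ)
          * (B ⊗ₖ (1 : Matrix (Fin s) (Fin s) ℝ)) := by
      simp [← mul_kronecker_mul]
    rw [mulVec_mulVec, mulVec_mulVec, e1, e2, ← mulVec_mulVec, ← mulVec_mulVec,
      ← mulVec_sub, hdyn, mulVec_zero]
  · -- initial condition
    have hd := hdyn
    rw [sub_mulVec] at hd
    have h0 : paramTraj τ
        ((((1 : Matrix (Fin n) (Fin n) ℝ) ⊗ₖ Mᵀ).mulVec ηx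
          - (A ⊗ₖ (1 : Matrix (Fin s) (Fin s) ℝ)).mulVec ηx)
          - (B ⊗ₖ (1 : Matrix (Fin s) (Fin s) ℝ)).mulVec ηu) 0 = 0 := by
      rw [hd]; funext i; simp [paramTraj]
    rw [paramTraj_sub, paramTraj_sub, paramTraj_shift M τ hrec,
      paramTraj_kron_one, paramTraj_kron_one, sub_sub, sub_eq_zero] at h0
    rw [paramTraj_shift M τ hrec, h0, hinit]
  · intro k c
    rw [paramTraj_shift M τ hrec, paramTraj_shift M τ hrec]
    exact hineq (k + 1) c
end

section
/- Let z̄(k+1) = Φ z̄(k) be a linear autonomous system on ℝ^{ps} with output constraint h(z̄(k)) ≤ 0, and suppose the set O_N = {z : h(Φ^k z) ≤ 0, k = 0,…,N} satisfies O_{N+1} = O_N for some N. Then O_N = O_∞ := {z : h(Φ^k z) ≤ 0 for all k ∈ ℕ}, i.e., the maximal output admissible set is finitely determined. -/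
open Matrix

/-- The output admissible set up to time `N` for the autonomous system
`z̄(k+1) = Φ z̄(k)` with output constraint `h(z̄(k)) ≤ 0`. -/
def admissibleSet {d nc : ℕ} (Φ : Matrix (Fin d) (Fin d) ℝ)
    (h : (Fin d → ℝ) → Fin nc → ℝ) (N : ℕ) : Set (Fin d → ℝ) :=
  {z | ∀ k ≤ N, ∀ c : Fin nc, h ((Φ ^ k).mulVec z) c ≤ 0}

/-- Finite determination (Gilbert–Tan): if `O_{N+1} = O_N`, then `O_N` equals the
maximal output admissible set `O_∞ = {z : h(Φ^k z) ≤ 0 for all k}`. -/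
theorem stmt_19 (d nc : ℕ) (Φ : Matrix (Fin d) (Fin d) ℝ)
    (h : (Fin d → ℝ) → Fin nc → ℝ) (N : ℕ)
    (hfix : admissibleSet Φ h (N + 1) = admissibleSet Φ h N) :
    admissibleSet Φ h N
      = {z | ∀ (k : ℕ) (c : Fin nc), h ((Φ ^ k).mulVec z) c ≤ 0} := by
  ext z
  constructor
  · intro hz
    -- invariance: z ∈ O_N → Φ z ∈ O_N
    have inv : ∀ w, w ∈ admissibleSet Φ h N → Φ.mulVec w ∈ admissibleSet Φ h N := by
      intro w hw
      have hw1 : w ∈ admissibleSet Φ h (N + 1) := hfix ▸ hw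
      intro k hk c
      have := hw1 (k + 1) (by omega) c
      simpa [pow_succ, Matrix.mulVec_mulVec] using this
    have key : ∀ m, (Φ ^ m).mulVec z ∈ admissibleSet Φ h N := by
      intro m
      induction m with
      | zero => simpa using hz
      | succ m ih =>
        have := inv _ ih
        simpa [pow_succ', Matrix.mulVec_mulVec] using this
    intro k c
    have := key k 0 (Nat.zero_le _) c
    simpa using this
  · intro hz k _ c
    exact hz k c
end
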